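/- Let P and Q be probability measures on a countable space with probability mass functions p and q, with P ≪ Q and Q ≪ P, and assume Σ_x q(x) e^{ε|log(p(x)/q(x))|} < ∞ for some ε > 0. Then the Cressie–Read power divergence CR_λ(P‖Q) converges to the reverse KL divergence KL(Q‖P) = Σ_x q(x) log(q(x)/p(x)) as λ → −1. -/

import Mathlib

open Real Filter Topology

lemma abs_exp_sub_one_le' (a : ℝ) : |Real.exp a - 1| ≤ |a| * Real.exp |a| := by
  have h1 := Real.add_one_le_exp a
  have h2 := Real.add_one_le_exp (-|a|)
  have h3 : Real.exp a ≤ Real.exp |a| := Real.exp_le_exp.mpr (le_abs_self a)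
  have h4 : Real.exp |a| * Real.exp (-|a|) = 1 := by
    rw [← Real.exp_add]; simp
  have h5 : (0:ℝ) < Real.exp |a| := Real.exp_pos _
  have h6 : -|a| ≤ a := neg_abs_le a
  have h7 : (1:ℝ) ≤ Real.exp |a| := by
    simpa using Real.exp_le_exp.mpr (abs_nonneg a)
  rw [abs_le]
  constructor
  · nlinarith [abs_nonneg a]
  · nlinarith [abs_nonneg a]

lemma tendsto_exp_slope (L : ℝ) :
    Tendsto (fun t : ℝ => (Real.exp (t * L) - 1) / t) (𝓝[≠] (0:ℝ)) (𝓝 L) := by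
  have hd : HasDerivAt (fun t : ℝ => Real.exp (t * L)) L 0 := by
    have h1 : HasDerivAt (fun t : ℝ => t * L) L 0 := (hasDerivAt_id 0).mul_const L |>.congr_deriv (by ring)
    have := (Real.hasDerivAt_exp (0 * L)).comp 0 h1
    simpa [Function.comp_def] using this
  have := hasDerivAt_iff_tendsto_slope.mp hd
  refine this.congr fun t => ?_
  simp [slope_def_field, div_eq_mul_inv, mul_comm]

/-- Let `p, q` be probability mass functions on a countable space with
`P ≪ Q`, `Q ≪ P`, and `Σₓ q(x) e^{ε|log(p(x)/q(x))|} < ∞` for some `ε > 0`. Then the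
Cressie–Read power divergence `CR_λ(P‖Q) = (1/(λ(λ+1))) Σₓ p(x)[(p(x)/q(x))^λ - 1]`
converges to the reverse KL divergence `KL(Q‖P) = Σₓ q(x) log(q(x)/p(x))` as `λ → -1`
(with `λ ∉ {0,-1}`). -/
theorem cressieRead_tendsto_reverseKL
    {X : Type*} [Countable X] (p q : X → ℝ)
    (hp0 : ∀ x, 0 ≤ p x) (hq0 : ∀ x, 0 ≤ q x)
    (hps : Summable p) (hqs : Summable q)
    (hp1 : ∑' x, p x = 1) (hq1 : ∑' x, q x = 1)
    (hacPQ : ∀ x, q x = 0 → p x = 0)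
    (hacQP : ∀ x, p x = 0 → q x = 0)
    (hexp : ∃ ε > (0 : ℝ),
      Summable (fun x => q x * Real.exp (ε * |Real.log (p x / q x)|))) :
    Tendsto (fun l : ℝ => (1 / (l * (l + 1))) * ∑' x, p x * ((p x / q x) ^ l - 1))
      (𝓝[{(0 : ℝ), -1}ᶜ] (-1))
      (𝓝 (∑' x, q x * Real.log (q x / p x))) := by
  obtain ⟨ε, hε, hsum⟩ := hexp
  set L : X → ℝ := fun x => Real.log (p x / q x) with hL
  set S : Set ℝ := {(0 : ℝ), -1}ᶜ with hS
  -- basic positivity facts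
  have hqpos : ∀ x, q x ≠ 0 → 0 < p x ∧ 0 < q x := by
    intro x hx
    have hq : 0 < q x := lt_of_le_of_ne (hq0 x) (Ne.symm hx)
    have hp : 0 < p x := by
      rcases lt_or_eq_of_le (hp0 x) with h | h
      · exact h
      · exact absurd (hacQP x h.symm) hx
    exact ⟨hp, hq⟩
  -- membership in S gives l ≠ 0 and l ≠ -1
  have hmemS : ∀ l : ℝ, l ∈ S → l ≠ 0 ∧ l + 1 ≠ 0 := by
    intro l hl
    simp only [hS, Set.mem_compl_iff, Set.mem_insert_iff, Set.mem_singleton_iff, not_or] at hl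
    refine ⟨hl.1, ?_⟩
    intro h
    exact hl.2 (by linarith)
  -- the modified summand
  set H : ℝ → X → ℝ := fun l x => (1 / (l * (l + 1))) * (q x * ((p x / q x) ^ (l + 1) - 1)) with hH
  -- the dominating bound
  set B : X → ℝ := fun x => (4 / ε) * (q x * Real.exp (ε * |L x|)) with hB
  have hBsum : Summable B := hsum.mul_left _
  -- eventual smallness of |l+1|
  have hev_small : ∀ δ : ℝ, 0 < δ → ∀ᶠ l in 𝓝[S] (-1 : ℝ), |l + 1| < δ := by
    intro δ hδ
    apply eventually_nhdsWithin_of_eventually_nhds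
    have : Metric.ball (-1 : ℝ) δ ∈ 𝓝 (-1 : ℝ) := Metric.ball_mem_nhds _ hδ
    filter_upwards [this] with l hl
    simpa [Real.dist_eq, abs_sub_comm, sub_neg_eq_add] using hl
  have hev_mem : ∀ᶠ l in 𝓝[S] (-1 : ℝ), l ∈ S := self_mem_nhdsWithin
  -- Step 1: tendsto of the modified sum by dominated convergence
  have step1 : Tendsto (fun l : ℝ => ∑' x, H l x) (𝓝[S] (-1))
      (𝓝 (∑' x, q x * Real.log (q x / p x))) := by
    apply tendsto_tsum_of_dominated_convergence hBsum
    · -- pointwise convergence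
      intro x
      by_cases hx : q x = 0
      · have hp : p x = 0 := hacPQ x hx
        have : ∀ l : ℝ, H l x = 0 := by
          intro l; simp only [hH]; rw [hx]; ring
        simp only [this, hx, zero_mul]
        exact tendsto_const_nhds
      · obtain ⟨hpp, hqp⟩ := hqpos x hx
        have hr : 0 < p x / q x := div_pos hpp hqp
        -- eventual rewriting
        have heq : ∀ᶠ l in 𝓝[S] (-1 : ℝ),
            H l x = q x * ((Real.exp ((l + 1) * L x) - 1) / (l + 1)) * l⁻¹ := by
          filter_upwards [hev_mem] with l hl
          obtain ⟨hl0, hl1⟩ := hmemS l hl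
          have : (p x / q x) ^ (l + 1) = Real.exp ((l + 1) * L x) := by
            rw [Real.rpow_def_of_pos hr, mul_comm]
          simp only [hH]
          rw [this, one_div, mul_inv]
          ring
        have T1 : Tendsto (fun l : ℝ => (Real.exp ((l + 1) * L x) - 1) / (l + 1))
            (𝓝[S] (-1)) (𝓝 (L x)) := by
          have hmap : Tendsto (fun l : ℝ => l + 1) (𝓝[S] (-1)) (𝓝[≠] (0 : ℝ)) := by
            rw [tendsto_nhdsWithin_iff]
            constructor
            · have : Tendsto (fun l : ℝ => l + 1) (𝓝 (-1 : ℝ)) (𝓝 ((-1 : ℝ) + 1)) :=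
                (continuous_id.add continuous_const).tendsto _
              simpa using this.mono_left nhdsWithin_le_nhds
            · filter_upwards [hev_mem] with l hl
              exact (hmemS l hl).2
          exact (tendsto_exp_slope (L x)).comp hmap
        have T2 : Tendsto (fun l : ℝ => l⁻¹) (𝓝[S] (-1)) (𝓝 (-1 : ℝ)) := by
          have h : Tendsto (fun l : ℝ => l⁻¹) (𝓝 (-1 : ℝ)) (𝓝 ((-1 : ℝ)⁻¹)) :=
            (continuousAt_inv₀ (by norm_num)).tendsto
          have h2 := h.mono_left (nhdsWithin_le_nhds (s := S))
          norm_num at h2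
          exact h2
        have Tall : Tendsto (fun l : ℝ => q x * ((Real.exp ((l + 1) * L x) - 1) / (l + 1)) * l⁻¹)
            (𝓝[S] (-1)) (𝓝 (q x * L x * (-1))) :=
          (tendsto_const_nhds.mul T1).mul T2
        have hval : q x * L x * (-1) = q x * Real.log (q x / p x) := by
          have : Real.log (q x / p x) = -Real.log (p x / q x) := by
            rw [← Real.log_inv, inv_div]
          rw [this, hL]; ring
        rw [← hval]
        have heq' : (fun l : ℝ => H l x) =ᶠ[𝓝[S] (-1)]
            (fun l : ℝ => q x * ((Real.exp ((l + 1) * L x) - 1) / (l + 1)) * l⁻¹) := heq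
        exact Tall.congr' heq'.symm
    · -- bound
      set δ : ℝ := min (ε / 2) (1 / 2) with hδ
      have hδpos : 0 < δ := by positivity
      filter_upwards [hev_small δ hδpos, hev_mem] with l hlδ hlS
      obtain ⟨hl0, hl1⟩ := hmemS l hlS
      have hlε : |l + 1| ≤ ε / 2 := le_of_lt (lt_of_lt_of_le hlδ (min_le_left _ _))
      have hlhalf : |l + 1| ≤ 1 / 2 := le_of_lt (lt_of_lt_of_le hlδ (min_le_right _ _))
      have habs_l : (1 : ℝ) / 2 ≤ |l| := by
        rw [abs_le] at hlhalf
        rw [le_abs]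
        right; linarith [hlhalf.2]
      intro x
      by_cases hx : q x = 0
      · have : H l x = 0 := by simp [hH, hx]
        rw [this]
        simp only [norm_zero]
        show (0:ℝ) ≤ B x
        rw [hB]
        exact mul_nonneg (by positivity) (mul_nonneg (hq0 x) (Real.exp_pos _).le)
      · obtain ⟨hpp, hqp⟩ := hqpos x hx
        have hr : 0 < p x / q x := div_pos hpp hqp
        have hrw : (p x / q x) ^ (l + 1) = Real.exp ((l + 1) * L x) := by
          rw [Real.rpow_def_of_pos hr, mul_comm]
        have key : |Real.exp ((l + 1) * L x) - 1| ≤ |l + 1| * |L x| * Real.exp (ε / 2 * |L x|) := by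
          have h1 := abs_exp_sub_one_le' ((l + 1) * L x)
          rw [abs_mul] at h1
          have h3 : Real.exp (|l + 1| * |L x|) ≤ Real.exp (ε / 2 * |L x|) :=
            Real.exp_le_exp.mpr (mul_le_mul_of_nonneg_right hlε (abs_nonneg _))
          calc |Real.exp ((l + 1) * L x) - 1|
              ≤ |l + 1| * |L x| * Real.exp (|l + 1| * |L x|) := h1
            _ ≤ |l + 1| * |L x| * Real.exp (ε / 2 * |L x|) :=
                mul_le_mul_of_nonneg_left h3 (by positivity)
        -- |L x| ≤ (2/ε) * exp (ε/2 * |L x|)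
        have hLbound : |L x| ≤ (2 / ε) * Real.exp (ε / 2 * |L x|) := by
          have := Real.add_one_le_exp (ε / 2 * |L x|)
          have h0 : ε / 2 * |L x| ≤ Real.exp (ε / 2 * |L x|) := by linarith
          calc |L x| = (2 / ε) * (ε / 2 * |L x|) := by field_simp
            _ ≤ (2 / ε) * Real.exp (ε / 2 * |L x|) := by
                apply mul_le_mul_of_nonneg_left h0 (by positivity)
        have hexpexp : Real.exp (ε / 2 * |L x|) * Real.exp (ε / 2 * |L x|) =
            Real.exp (ε * |L x|) := by
          rw [← Real.exp_add]; ring_nf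
        have hnorm : ‖H l x‖ = (1 / (|l| * |l + 1|)) * (q x * |Real.exp ((l + 1) * L x) - 1|) := by
          rw [hH]
          simp only [hrw]
          rw [Real.norm_eq_abs, abs_mul, abs_mul, abs_div, abs_one, abs_mul,
            abs_of_nonneg (hq0 x)]
        rw [hnorm]
        have hstep : (1 / (|l| * |l + 1|)) * (q x * |Real.exp ((l + 1) * L x) - 1|)
            ≤ (1 / (|l| * |l + 1|)) * (q x * (|l + 1| * |L x| * Real.exp (ε / 2 * |L x|))) := by
          apply mul_le_mul_of_nonneg_left _ (by positivity)
          exact mul_le_mul_of_nonneg_left key (hq0 x)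
        have habs_l1 : 0 < |l + 1| := abs_pos.mpr hl1
        have habs_l0 : 0 < |l| := abs_pos.mpr hl0
        have hstep2 : (1 / (|l| * |l + 1|)) * (q x * (|l + 1| * |L x| * Real.exp (ε / 2 * |L x|)))
            = (1 / |l|) * (q x * (|L x| * Real.exp (ε / 2 * |L x|))) := by
          field_simp
        have hstep3 : (1 / |l|) * (q x * (|L x| * Real.exp (ε / 2 * |L x|)))
            ≤ 2 * (q x * (|L x| * Real.exp (ε / 2 * |L x|))) := by
          apply mul_le_mul_of_nonneg_right _ (by positivity)
          rw [div_le_iff₀ habs_l0]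
          linarith
        have hstep4 : 2 * (q x * (|L x| * Real.exp (ε / 2 * |L x|))) ≤ B x := by
          rw [hB]
          have : |L x| * Real.exp (ε / 2 * |L x|) ≤ (2 / ε) * Real.exp (ε * |L x|) := by
            calc |L x| * Real.exp (ε / 2 * |L x|)
                ≤ ((2 / ε) * Real.exp (ε / 2 * |L x|)) * Real.exp (ε / 2 * |L x|) :=
                  mul_le_mul_of_nonneg_right hLbound (Real.exp_pos _).le
              _ = (2 / ε) * Real.exp (ε * |L x|) := by rw [mul_assoc, hexpexp]
          calc 2 * (q x * (|L x| * Real.exp (ε / 2 * |L x|)))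
              ≤ 2 * (q x * ((2 / ε) * Real.exp (ε * |L x|))) := by
                apply mul_le_mul_of_nonneg_left _ (by norm_num)
                exact mul_le_mul_of_nonneg_left this (hq0 x)
            _ = (4 / ε) * (q x * Real.exp (ε * |L x|)) := by ring
        linarith [hstep, hstep2 ▸ hstep3, hstep4]
  -- Step 2: eventual equality of the original function with the modified sum
  have step2 : (fun l : ℝ => (1 / (l * (l + 1))) * ∑' x, p x * ((p x / q x) ^ l - 1))
      =ᶠ[𝓝[S] (-1)] (fun l : ℝ => ∑' x, H l x) := by
    filter_upwards [hev_small ε hε, hev_mem] with l hlε hlS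
    obtain ⟨hl0, hl1⟩ := hmemS l hlS
    -- summability of the modified summand
    have hSsum : Summable (fun x => q x * ((p x / q x) ^ (l + 1) - 1)) := by
      apply Summable.of_norm_bounded (hsum.add hqs)
      intro x
      by_cases hx : q x = 0
      · have hz : q x * ((p x / q x) ^ (l + 1) - 1) = 0 := by rw [hx]; ring
        rw [hz, norm_zero]
        exact add_nonneg (mul_nonneg (hq0 x) (Real.exp_pos _).le) (hq0 x)
      · obtain ⟨hpp, hqp⟩ := hqpos x hx
        have hr : 0 < p x / q x := div_pos hpp hqp
        have hrw : (p x / q x) ^ (l + 1) = Real.exp ((l + 1) * L x) := by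
          rw [Real.rpow_def_of_pos hr, mul_comm]
        rw [Real.norm_eq_abs, abs_mul, abs_of_nonneg (hq0 x), hrw]
        have h1 : |Real.exp ((l + 1) * L x) - 1| ≤ Real.exp (ε * |L x|) + 1 := by
          have hE : Real.exp ((l + 1) * L x) ≤ Real.exp (ε * |L x|) := by
            apply Real.exp_le_exp.mpr
            calc (l + 1) * L x ≤ |(l + 1) * L x| := le_abs_self _
              _ = |l + 1| * |L x| := abs_mul _ _
              _ ≤ ε * |L x| := mul_le_mul_of_nonneg_right (le_of_lt hlε) (abs_nonneg _)
          rw [abs_sub_le_iff]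
          constructor
          · linarith
          · have := Real.exp_pos ((l + 1) * L x)
            have := Real.exp_pos (ε * |L x|)
            linarith
        calc q x * |Real.exp ((l + 1) * L x) - 1| ≤ q x * (Real.exp (ε * |L x|) + 1) :=
              mul_le_mul_of_nonneg_left h1 (hq0 x)
          _ = q x * Real.exp (ε * |L x|) + q x := by ring
    have hPQsum : Summable (fun x => p x - q x) := hps.sub hqs
    -- pointwise identity
    have hpt : ∀ x, p x * ((p x / q x) ^ l - 1)
        = q x * ((p x / q x) ^ (l + 1) - 1) - (p x - q x) := by
      intro x
      by_cases hx : q x = 0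
      · have hp : p x = 0 := hacPQ x hx
        rw [hp, hx]
        simp [Real.zero_rpow hl0, Real.zero_rpow hl1]
      · obtain ⟨hpp, hqp⟩ := hqpos x hx
        have hr : 0 < p x / q x := div_pos hpp hqp
        have h1 : (p x / q x) ^ (l + 1) = (p x / q x) ^ l * (p x / q x) := by
          rw [← Real.rpow_add_one hr.ne' l]
        have h2 : q x * (p x / q x) = p x := by field_simp
        rw [h1]
        have : q x * ((p x / q x) ^ l * (p x / q x)) = p x * (p x / q x) ^ l := by
          rw [← mul_assoc, mul_comm (q x), mul_assoc, h2, mul_comm]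
        nlinarith [this]
    have hsum_eq : ∑' x, p x * ((p x / q x) ^ l - 1)
        = ∑' x, q x * ((p x / q x) ^ (l + 1) - 1) := by
      have h0 : ∑' x, (p x - q x) = 0 := by
        rw [Summable.tsum_sub hps hqs, hp1, hq1]; ring
      calc ∑' x, p x * ((p x / q x) ^ l - 1)
          = ∑' x, (q x * ((p x / q x) ^ (l + 1) - 1) - (p x - q x)) := by
            exact tsum_congr hpt
        _ = ∑' x, q x * ((p x / q x) ^ (l + 1) - 1) - ∑' x, (p x - q x) :=
            Summable.tsum_sub hSsum hPQsum
        _ = ∑' x, q x * ((p x / q x) ^ (l + 1) - 1) := by rw [h0]; ring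
    rw [hsum_eq, hH]
    exact (tsum_mul_left).symm
  exact step1.congr' step2.symm
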